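/- arXiv:1901.06683 — 2 statements merged into one kernel-verified Lean document; each statement's English description precedes it below -/
import Mathlib

section
/- There is no prime power q = p^a ≥ 2 such that q³ - q + 1 divides 8a(q⁴-1)(q-1). -/
/-!
Modulo `N = q³ - q + 1` one has `(q⁴ - 1)(q - 1) ≡ -q(2q - 1)`, and `q` is a unit mod `N`, so
`N ∣ 8a(q⁴ - 1)(q - 1)` forces `N ∣ 8a(2q - 1)`. Since `4^a ≤ q²`, the right-hand side is
smaller than `N` once `a ≥ 3`; the few remaining pairs with `a ≤ 2`, `q ≤ 5` are checked by hand.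
-/

theorem dvd_mul_two_mul_sub_one_of_dvd {R : Type*} [CommRing R] {q m : R}
    (h : q ^ 3 - q + 1 ∣ m * (q ^ 4 - 1) * (q - 1)) : q ^ 3 - q + 1 ∣ m * (2 * q - 1) := by
  have hcop : IsCoprime (q ^ 3 - q + 1) q := ⟨1, -(q ^ 2 - 1), by ring⟩
  refine hcop.dvd_of_dvd_mul_left ?_
  -- `(q⁴ - 1)(q - 1) = (q² - q + 1)(q³ - q + 1) - q(2q - 1)`
  have hmul : q ^ 3 - q + 1 ∣ m * (q ^ 2 - q + 1) * (q ^ 3 - q + 1) := dvd_mul_left _ _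
  convert dvd_sub hmul h using 1
  ring

theorem sixteen_mul_lt_four_pow {a : ℕ} (ha : 3 ≤ a) : 16 * a < 4 ^ a := by
  induction a, ha using Nat.le_induction with
  | base => norm_num
  | succ n _ ih => rw [pow_succ]; omega

theorem eight_mul_two_mul_sub_one_lt {a q : ℕ} (ha : 3 ≤ a) (hq : 2 ^ a ≤ q) :
    8 * a * (2 * (q : ℤ) - 1) < q ^ 3 - q + 1 := by
  have hsq : 16 * a < q ^ 2 := calc
    16 * a < 4 ^ a := sixteen_mul_lt_four_pow ha
    _ = (2 ^ a) ^ 2 := by rw [← pow_mul, mul_comm, pow_mul]; norm_num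
    _ ≤ q ^ 2 := by gcongr
  have hsq' : 16 * (a : ℤ) + 1 ≤ q ^ 2 := by exact_mod_cast hsq
  have ha' : (1 : ℤ) ≤ a := by exact_mod_cast (by omega : 1 ≤ a)
  nlinarith

/-- There is no prime power `q = p^a ≥ 2` such that `q³ - q + 1` divides
`8a(q⁴-1)(q-1)`. -/
theorem stmt_7 :
    ¬ ∃ p a q : ℕ, p.Prime ∧ 0 < a ∧ q = p ^ a ∧
      (q ^ 3 - q + 1) ∣ 8 * a * (q ^ 4 - 1) * (q - 1) := by
  rintro ⟨p, a, q, hp, ha, rfl, hdvd⟩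
  have hq : 2 ^ a ≤ p ^ a := Nat.pow_le_pow_left hp.two_le a
  have hq2 : 2 ≤ p ^ a := (Nat.le_self_pow ha.ne' 2).trans hq
  generalize p ^ a = q at hq hq2 hdvd
  have hℤ : ((q : ℤ) ^ 3 - q + 1) ∣ 8 * a * (2 * q - 1 : ℤ) := by
    apply dvd_mul_two_mul_sub_one_of_dvd
    have := Int.natCast_dvd_natCast.mpr hdvd
    push_cast [Nat.cast_sub (Nat.le_self_pow three_ne_zero q),
      Nat.cast_sub (Nat.one_le_pow 4 q (by omega)), Nat.cast_sub (by omega : 1 ≤ q)] at this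
    exact this
  have hq2' : (2 : ℤ) ≤ q := by exact_mod_cast hq2
  have ha' : (1 : ℤ) ≤ a := by exact_mod_cast ha
  have hle := Int.le_of_dvd (by nlinarith) hℤ
  have ha2 : a ≤ 2 := by
    by_contra! h
    exact (eight_mul_two_mul_sub_one_lt h hq).not_ge hle
  have hq5 : q ≤ 5 := by
    by_contra! h
    have h6 : (6 : ℤ) ≤ q := by exact_mod_cast h
    have ha2' : (a : ℤ) ≤ 2 := by exact_mod_cast ha2
    nlinarith [mul_le_mul h6 h6 (by norm_num) (by positivity)]
  interval_cases a <;> interval_cases q <;> norm_num at hℤ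
end

section
/- Let q ≥ 4 be a power of 2, v = q²(q³+1), e = gcd(5, q-2), and a = log₂ q. If k = m(v-1)/(ea) + 1 for a positive integer m with m < ea, and q divides k, then q ≤ ea - 1; since ea ≤ 5a ≤ q this is impossible, so q does not divide k. -/
/-!
Since `q ∣ v`, reducing `k · ea = m (v - 1) + ea` modulo `q` with `q ∣ k` gives `q ∣ ea - m`.
As `0 < ea - m ≤ ea`, this forces `q ≤ ea`, whereas `ea < 2^a = q`: for `a ≥ 5` because
`e ≤ 5`, and directly for `a < 5`.
-/

lemma five_mul_lt_two_pow {a : ℕ} (ha : 5 ≤ a) : 5 * a < 2 ^ a := by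
  induction a, ha using Nat.le_induction with
  | base => norm_num
  | succ n hn ih =>
    rw [pow_succ]
    omega

lemma gcd_five_two_pow_sub_two_mul_lt {a : ℕ} (ha : 2 ≤ a) :
    Nat.gcd 5 (2 ^ a - 2) * a < 2 ^ a := by
  rcases Nat.lt_or_ge a 5 with h | h
  · interval_cases a <;> decide
  · calc Nat.gcd 5 (2 ^ a - 2) * a ≤ 5 * a :=
          Nat.mul_le_mul_right a (Nat.le_of_dvd (by norm_num) (Nat.gcd_dvd_left _ _))
      _ < 2 ^ a := five_mul_lt_two_pow h

lemma dvd_sub_of_mul_eq_mul_pred_add {q k v m n : ℕ} (hk : q ∣ k) (hv : q ∣ v) (hv0 : 0 < v)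
    (hmn : m ≤ n) (h : k * n = m * (v - 1) + n) : q ∣ n - m := by
  have hz : ((n - m : ℕ) : ℤ) = k * n - m * v := by
    have := congrArg (Nat.cast : ℕ → ℤ) h
    push_cast [Nat.cast_sub hmn, Nat.cast_sub (Nat.one_le_iff_ne_zero.mpr hv0.ne')] at this ⊢
    linarith
  rw [← Int.natCast_dvd_natCast, hz]
  exact dvd_sub (dvd_mul_of_dvd_left (Int.natCast_dvd_natCast.mpr hk) _)
    (dvd_mul_of_dvd_right (Int.natCast_dvd_natCast.mpr hv) _)

theorem stmt_18_general (a q m k : ℕ) (hq : q = 2 ^ a) (hq4 : 4 ≤ q)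
    (hmlt : m < Nat.gcd 5 (q - 2) * a)
    (hk : k * (Nat.gcd 5 (q - 2) * a) =
      m * (q ^ 2 * (q ^ 3 + 1) - 1) + Nat.gcd 5 (q - 2) * a) :
    ¬ q ∣ k := by
  subst hq
  intro hqk
  have ha : 2 ≤ a := (Nat.pow_le_pow_iff_right one_lt_two).mp (show 2 ^ 2 ≤ 2 ^ a from hq4)
  have hdvd : 2 ^ a ∣ Nat.gcd 5 (2 ^ a - 2) * a - m :=
    dvd_sub_of_mul_eq_mul_pred_add hqk (dvd_mul_of_dvd_left (dvd_pow_self _ two_ne_zero) _)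
      (by positivity) hmlt.le hk
  exact (Nat.le_of_dvd (Nat.sub_pos_of_lt hmlt) hdvd).not_gt
    ((Nat.sub_le _ _).trans_lt (gcd_five_two_pow_sub_two_mul_lt ha))

/-- Let `q = 2^a ≥ 4`, `v = q²(q³+1)`, `e = gcd(5, q-2)`. If
`k = m(v-1)/(ea) + 1` for a positive integer `m` with `m < ea`, then `q` does
not divide `k`. -/
theorem stmt_18 (a q m k : ℕ) (hq : q = 2 ^ a) (hq4 : 4 ≤ q)
    (hm : 0 < m) (hmlt : m < Nat.gcd 5 (q - 2) * a)
    (hk : k * (Nat.gcd 5 (q - 2) * a) =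
      m * (q ^ 2 * (q ^ 3 + 1) - 1) + Nat.gcd 5 (q - 2) * a) :
    ¬ q ∣ k :=
  stmt_18_general a q m k hq hq4 hmlt hk
end
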